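/- The kernel of H³ equals the span of the three vectors |u,1,0⟩+|x,0,0⟩, |a,0,0⟩+|x,1,0⟩, and |d,0,0⟩+|d′,0,1⟩ (coordinates in the order α, β, γ). -/

import Mathlib

noncomputable section

/-- Basis state `|i, b⟩` of `ℂ⁵ ⊗ ℂ²`.
Basis labels for `ℂ⁵` (α-type qudit): `u = 0`, `a = 1`, `d = 2`, `x = 3`, `d′ = 4`. -/
def ket52 (i : Fin 5) (b : Fin 2) : Fin 5 × Fin 2 → ℂ := fun p => if p = (i, b) then 1 else 0

/-- Rank-one (outer product) operator `|v⟩⟨v|`. -/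
def outer {ι : Type*} (v : ι → ℂ) : Matrix ι ι ℂ := Matrix.vecMulVec v (star v)

/-- The space `ℂ⁵ ⊗ ℂ² ⊗ ℂ²`, with factors labeled `α`, `β`, `γ`. -/
abbrev T3 : Type := Fin 5 × Fin 2 × Fin 2

/-- Basis state `|i, b, c⟩` of `ℂ⁵ ⊗ ℂ² ⊗ ℂ²`. -/
def ket3 (i : Fin 5) (b c : Fin 2) : T3 → ℂ := fun p => if p = (i, b, c) then 1 else 0

/-- Lift an operator on the `(α, β)` factors to `ℂ⁵ ⊗ ℂ² ⊗ ℂ²` (identity on `γ`). -/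
def onAB (M : Matrix (Fin 5 × Fin 2) (Fin 5 × Fin 2) ℂ) : Matrix T3 T3 ℂ :=
  fun p q => if p.2.2 = q.2.2 then M (p.1, p.2.1) (q.1, q.2.1) else 0

/-- Lift an operator on the `(α, γ)` factors to `ℂ⁵ ⊗ ℂ² ⊗ ℂ²` (identity on `β`). -/
def onAG (M : Matrix (Fin 5 × Fin 2) (Fin 5 × Fin 2) ℂ) : Matrix T3 T3 ℂ :=
  fun p q => if p.2.1 = q.2.1 then M (p.1, p.2.2) (q.1, q.2.2) else 0

/-- The operator `H³` on `ℂ⁵ ⊗ ℂ² ⊗ ℂ²`.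
With labels `u = 0`, `a = 1`, `d = 2`, `x = 3`, `d′ = 4`. -/
def H3mat : Matrix T3 T3 ℂ :=
  onAB (outer (ket52 0 0)) + onAG (outer (ket52 0 1)) +
  onAB (outer (ket52 1 1)) + onAG (outer (ket52 1 1)) +
  onAB (outer (ket52 2 1)) + onAG (outer (ket52 2 1)) +
  onAB (outer (ket52 4 1)) + onAG (outer (ket52 4 0)) +
  onAG (outer (ket52 3 1)) +
  (1 / 2 : ℂ) • onAB (outer (ket52 3 0 - ket52 0 1)) +
  (1 / 2 : ℂ) • onAB (outer (ket52 3 1 - ket52 1 0)) +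
  (1 / 2 : ℂ) • onAG (outer (ket52 2 0 - ket52 4 1))

/-!
`H³` is frustration-free: every term is positive semidefinite, so a vector lies in the kernel
of the sum iff it lies in the kernel of every term. A rank-one term `|w⟩⟨w|` lifted from two of
the three factors kills `v` iff `⟨w|` vanishes on every slice of `v` along the third factor.
These conditions force all but six coordinates of `v` to vanish and identify the remaining six
in three pairs, one pair for each of the three given vectors.
-/

open Matrix
open scoped ComplexOrder Kronecker

theorem Matrix.PosSemidef.add_mulVec_eq_zero_iff {𝕜 n : Type*} [RCLike 𝕜] [Fintype n]
    {A B : Matrix n n 𝕜} (hA : A.PosSemidef) (hB : B.PosSemidef) (x : n → 𝕜) :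
    (A + B) *ᵥ x = 0 ↔ A *ᵥ x = 0 ∧ B *ᵥ x = 0 := by
  rw [← (hA.add hB).dotProduct_mulVec_zero_iff, ← hA.dotProduct_mulVec_zero_iff,
    ← hB.dotProduct_mulVec_zero_iff, add_mulVec, dotProduct_add]
  exact add_eq_zero_iff_of_nonneg (hA.dotProduct_mulVec_nonneg x) (hB.dotProduct_mulVec_nonneg x)

theorem posSemidef_outer {ι : Type*} [Fintype ι] (v : ι → ℂ) : (outer v).PosSemidef :=
  posSemidef_vecMulVec_self_star v

theorem outer_mulVec {ι : Type*} [Fintype ι] (v y : ι → ℂ) : outer v *ᵥ y = (star v ⬝ᵥ y) • v := by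
  rw [outer, vecMulVec_mulVec, op_smul_eq_smul]

theorem outer_mulVec_eq_zero_iff {ι : Type*} [Fintype ι] {v : ι → ℂ} (hv : v ≠ 0) (y : ι → ℂ) :
    outer v *ᵥ y = 0 ↔ star v ⬝ᵥ y = 0 := by
  rw [outer_mulVec, smul_eq_zero, or_iff_left hv]

theorem ket52_eq_single (i : Fin 5) (b : Fin 2) : ket52 i b = Pi.single (i, b) 1 := by
  funext p
  simp [ket52, Pi.single_apply]

theorem star_ket52_dotProduct (i : Fin 5) (b : Fin 2) (y : Fin 5 × Fin 2 → ℂ) :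
    star (ket52 i b) ⬝ᵥ y = y (i, b) := by
  rw [ket52_eq_single, ← Pi.single_star, star_one, single_one_dotProduct]

def sliceAB (v : T3 → ℂ) (c : Fin 2) : Fin 5 × Fin 2 → ℂ := fun p => v (p.1, p.2, c)

def sliceAG (v : T3 → ℂ) (b : Fin 2) : Fin 5 × Fin 2 → ℂ := fun p => v (p.1, b, p.2)

theorem onAB_eq_submatrix_kronecker (M : Matrix (Fin 5 × Fin 2) (Fin 5 × Fin 2) ℂ) :
    onAB M = (M ⊗ₖ (1 : Matrix (Fin 2) (Fin 2) ℂ)).submatrix (fun p => ((p.1, p.2.1), p.2.2))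
      (fun p => ((p.1, p.2.1), p.2.2)) := by
  ext p q
  simp [onAB, one_apply]

theorem onAG_eq_submatrix_kronecker (M : Matrix (Fin 5 × Fin 2) (Fin 5 × Fin 2) ℂ) :
    onAG M = (M ⊗ₖ (1 : Matrix (Fin 2) (Fin 2) ℂ)).submatrix (fun p => ((p.1, p.2.2), p.2.1))
      (fun p => ((p.1, p.2.2), p.2.1)) := by
  ext p q
  simp [onAG, one_apply]

theorem Matrix.PosSemidef.onAB {M : Matrix (Fin 5 × Fin 2) (Fin 5 × Fin 2) ℂ}
    (hM : M.PosSemidef) : (onAB M).PosSemidef := by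
  rw [onAB_eq_submatrix_kronecker]
  exact (hM.kronecker PosSemidef.one).submatrix _

theorem Matrix.PosSemidef.onAG {M : Matrix (Fin 5 × Fin 2) (Fin 5 × Fin 2) ℂ}
    (hM : M.PosSemidef) : (onAG M).PosSemidef := by
  rw [onAG_eq_submatrix_kronecker]
  exact (hM.kronecker PosSemidef.one).submatrix _

theorem onAB_mulVec (M : Matrix (Fin 5 × Fin 2) (Fin 5 × Fin 2) ℂ) (v : T3 → ℂ) (p : T3) :
    (onAB M *ᵥ v) p = (M *ᵥ sliceAB v p.2.2) (p.1, p.2.1) := by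
  simp [onAB, sliceAB, mulVec, dotProduct, Fintype.sum_prod_type]

theorem onAB_mulVec_eq_zero_iff (M : Matrix (Fin 5 × Fin 2) (Fin 5 × Fin 2) ℂ) (v : T3 → ℂ) :
    onAB M *ᵥ v = 0 ↔ ∀ c, M *ᵥ sliceAB v c = 0 := by
  simp only [funext_iff, onAB_mulVec, Pi.zero_apply, Prod.forall]
  exact ⟨fun h c i b => h i b c, fun h i b c => h c i b⟩

theorem onAG_mulVec (M : Matrix (Fin 5 × Fin 2) (Fin 5 × Fin 2) ℂ) (v : T3 → ℂ) (p : T3) :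
    (onAG M *ᵥ v) p = (M *ᵥ sliceAG v p.2.1) (p.1, p.2.2) := by
  simp [onAG, sliceAG, mulVec, dotProduct, Fintype.sum_prod_type]

theorem onAG_mulVec_eq_zero_iff (M : Matrix (Fin 5 × Fin 2) (Fin 5 × Fin 2) ℂ) (v : T3 → ℂ) :
    onAG M *ᵥ v = 0 ↔ ∀ b, M *ᵥ sliceAG v b = 0 := by
  simp only [funext_iff, onAG_mulVec, Pi.zero_apply, Prod.forall]
  exact ⟨fun h b i c => h i b c, fun h i b c => h b i c⟩

theorem outer_ket52_mulVec_eq_zero_iff (i : Fin 5) (b : Fin 2) (y : Fin 5 × Fin 2 → ℂ) :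
    outer (ket52 i b) *ᵥ y = 0 ↔ y (i, b) = 0 := by
  rw [outer_mulVec_eq_zero_iff, star_ket52_dotProduct]
  simp [ket52_eq_single]

theorem outer_ket52_sub_mulVec_eq_zero_iff {i j : Fin 5} {b b' : Fin 2} (h : (i, b) ≠ (j, b'))
    (y : Fin 5 × Fin 2 → ℂ) :
    outer (ket52 i b - ket52 j b') *ᵥ y = 0 ↔ y (i, b) = y (j, b') := by
  have hne : ket52 i b - ket52 j b' ≠ 0 := fun h0 => by
    simpa [ket52, Prod.ext_iff.not.mp h] using congrFun h0 (i, b)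
  rw [outer_mulVec_eq_zero_iff hne, star_sub, sub_dotProduct, star_ket52_dotProduct,
    star_ket52_dotProduct, sub_eq_zero]

theorem H3mat_mulVec_eq_zero_iff (v : T3 → ℂ) :
    H3mat *ᵥ v = 0 ↔
      (∀ c, v (0, 0, c) = 0) ∧ (∀ b, v (0, b, 1) = 0) ∧
      (∀ c, v (1, 1, c) = 0) ∧ (∀ b, v (1, b, 1) = 0) ∧
      (∀ c, v (2, 1, c) = 0) ∧ (∀ b, v (2, b, 1) = 0) ∧
      (∀ c, v (4, 1, c) = 0) ∧ (∀ b, v (4, b, 0) = 0) ∧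
      (∀ b, v (3, b, 1) = 0) ∧
      (∀ c, v (3, 0, c) = v (0, 1, c)) ∧ (∀ c, v (3, 1, c) = v (1, 0, c)) ∧
      (∀ b, v (2, b, 0) = v (4, b, 1)) := by
  have hpsd := fun w : Fin 5 × Fin 2 → ℂ => posSemidef_outer w
  have half : (0 : ℂ) ≤ 1 / 2 := by positivity
  -- the positivity side conditions recurse through the eleven nested sums of `H3mat`
  simp (maxDischargeDepth := 20) only [H3mat, PosSemidef.add_mulVec_eq_zero_iff, smul_mulVec,
    smul_eq_zero, PosSemidef.add, PosSemidef.smul, PosSemidef.onAB, PosSemidef.onAG, hpsd, half]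
  simp only [onAB_mulVec_eq_zero_iff, onAG_mulVec_eq_zero_iff, outer_ket52_mulVec_eq_zero_iff,
    outer_ket52_sub_mulVec_eq_zero_iff (by decide : ((3 : Fin 5), (0 : Fin 2)) ≠ (0, 1)),
    outer_ket52_sub_mulVec_eq_zero_iff (by decide : ((3 : Fin 5), (1 : Fin 2)) ≠ (1, 0)),
    outer_ket52_sub_mulVec_eq_zero_iff (by decide : ((2 : Fin 5), (0 : Fin 2)) ≠ (4, 1)),
    sliceAB, sliceAG, one_div, inv_eq_zero, two_ne_zero, false_or, and_assoc]

theorem stmt_10 :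
    LinearMap.ker (Matrix.mulVecLin H3mat) =
      Submodule.span ℂ
        ({ket3 0 1 0 + ket3 3 0 0, ket3 1 0 0 + ket3 3 1 0, ket3 2 0 0 + ket3 4 0 1} :
          Set (T3 → ℂ)) := by
  ext v
  rw [LinearMap.mem_ker, mulVecLin_apply, H3mat_mulVec_eq_zero_iff, Submodule.mem_span_triple]
  constructor
  · intro h
    refine ⟨v (0, 1, 0), v (1, 0, 0), v (4, 0, 1), funext fun p => ?_⟩
    fin_cases p <;> simp [ket3, h]
  · rintro ⟨a, b, c, rfl⟩
    simp [ket3]
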